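/- arXiv:1905.10118 — 2 statements merged into one kernel-verified Lean document; each statement's English description precedes it below -/
import Mathlib

section
/- With f(s, ψ) = (1/2)[Γ̃0 - log Γ̃0 - 1 + ((1-α)μ1 + αν1 - (1-α)μ0 - αν0)²/α · Γ̃1] for s = (Γ̃0, Γ̃1) ∈ S = {s : Γ̃0 > 0, Γ̃1 > 0} and ψ = (ν0, ν1, α) ∈ Ψ, and with the correspondence C of the paper, the value function f*(ψ) = min{f(s,ψ) : s ∈ C(ψ)} is continuous on Ψ. -/
/-!
On `Ψ` the constraint set `C(ψ)` is the triangle `a y ≤ x ≤ (a + c) y - 1, y ≤ 1 / e` whose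
coefficients `0 < e ≤ c`, `0 < a` depend continuously on `ψ`. Sweeping `y` over `[1/c, 1/e]` and
then `x` over the fibre parametrizes it by the unit square, continuously in `ψ`, so `f*` becomes
the minimum over a fixed compact set of a jointly continuous function (`log` is harmless because
`x ≥ a y > 0` on the triangle). Its continuity is then the fixed-compact-set case of Berge's
maximum theorem.
-/

open Set

/-- `d0(ψ) = [(1-α)Σ0 + α(1-α)(μ0-ν0)²]/α`. -/
noncomputable def d0 (S0 μ0 ν0 α : ℝ) : ℝ :=
  ((1 - α) * S0 + α * (1 - α) * (μ0 - ν0) ^ 2) / α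

/-- `d1(ψ) = [(1-α)Σ1 + α(1-α)(μ1-ν1)²]/α`. -/
noncomputable def d1 (S1 μ1 ν1 α : ℝ) : ℝ :=
  ((1 - α) * S1 + α * (1 - α) * (μ1 - ν1) ^ 2) / α

/-- The parameter set `Ψ = {(ν0,ν1,α) : α[(ν0-μ0)² + (ν1-μ1)²] ≤ δ, 0 < α < 1}`,
with `ψ = (ν0, ν1, α)`. -/
def PsiSet (μ0 μ1 δ : ℝ) : Set (ℝ × ℝ × ℝ) :=
  {ψ | ψ.2.2 * ((ψ.1 - μ0) ^ 2 + (ψ.2.1 - μ1) ^ 2) ≤ δ ∧ 0 < ψ.2.2 ∧ ψ.2.2 < 1}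

/-- The correspondence `C : Ψ ⇉ ℝ²` of the paper, with `ψ = (ν0, ν1, α)` and
`s = (Γ̃0, Γ̃1)`. -/
noncomputable def corr (S0 S1 δ μ0 μ1 : ℝ) (ψ : ℝ × ℝ × ℝ) : Set (ℝ × ℝ) :=
  {s : ℝ × ℝ |
    (S0 + d0 S0 μ0 ψ.1 ψ.2.2) * s.2 ≤ s.1 ∧
    s.1 ≤ (δ / ψ.2.2 - (ψ.1 - μ0) ^ 2 - (ψ.2.1 - μ1) ^ 2 + S0 + S1
            + d0 S0 μ0 ψ.1 ψ.2.2 + d1 S1 μ1 ψ.2.1 ψ.2.2) * s.2 - 1 ∧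
    s.2 ≤ 1 / (S1 + d1 S1 μ1 ψ.2.1 ψ.2.2)}

/-- The objective `f(s, ψ)` of Problem 4, with `s = (Γ̃0, Γ̃1)` and `ψ = (ν0, ν1, α)`. -/
noncomputable def objF (μ0 μ1 : ℝ) (s : ℝ × ℝ) (ψ : ℝ × ℝ × ℝ) : ℝ :=
  (1 / 2) * (s.1 - Real.log s.1 - 1
    + ((1 - ψ.2.2) * μ1 + ψ.2.2 * ψ.2.1 - (1 - ψ.2.2) * μ0 - ψ.2.2 * ψ.1) ^ 2 / ψ.2.2 * s.2)

theorem IsCompact.continuousOn_sInf_image {α β γ : Type*} [ConditionallyCompleteLinearOrder α]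
    [TopologicalSpace α] [OrderTopology α] [TopologicalSpace β] [TopologicalSpace γ]
    {f : γ → β → α} {s : Set γ} {K : Set β} (hK : IsCompact K)
    (hf : ContinuousOn (fun p : γ × β => f p.1 p.2) (s ×ˢ K)) :
    ContinuousOn (fun x => sInf (f x '' K)) s := by
  have : CompactSpace K := isCompact_iff_compactSpace.mp hK
  have hf' : Continuous fun p : s × K => f p.1 p.2 :=
    hf.comp_continuous (continuous_subtype_val.prodMap continuous_subtype_val)
      fun p => ⟨p.1.2, p.2.2⟩
  rw [continuousOn_iff_continuous_domRestrict]
  have := isCompact_univ.continuous_sInf (f := fun (x : s) (k : K) => f x k) hf'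
  simp only [image_univ, ← image_eq_range] at this
  exact this

theorem Real.Icc_eq_image_lerp {p q : ℝ} (h : p ≤ q) :
    Icc p q = (fun θ => (1 - θ) * p + θ * q) '' Icc 0 1 := by
  rw [← segment_eq_Icc h, segment_eq_image]
  rfl

def triangle (a c e : ℝ) : Set (ℝ × ℝ) :=
  {s | a * s.2 ≤ s.1 ∧ s.1 ≤ (a + c) * s.2 - 1 ∧ s.2 ≤ 1 / e}

noncomputable def triangleParam (a c e : ℝ) (k : ℝ × ℝ) : ℝ × ℝ :=
  let y := (1 - k.1) * (1 / c) + k.1 * (1 / e)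
  ((1 - k.2) * (a * y) + k.2 * ((a + c) * y - 1), y)

theorem mem_triangle_iff {a c e : ℝ} (hc : 0 < c) {s : ℝ × ℝ} :
    s ∈ triangle a c e ↔
      s.2 ∈ Icc (1 / c) (1 / e) ∧ s.1 ∈ Icc (a * s.2) ((a + c) * s.2 - 1) := by
  constructor
  · rintro ⟨h1, h2, h3⟩
    refine ⟨⟨?_, h3⟩, h1, h2⟩
    rw [div_le_iff₀ hc]
    linarith
  · rintro ⟨⟨-, h3⟩, h1, h2⟩
    exact ⟨h1, h2, h3⟩

theorem triangle_eq_image_triangleParam {a c e : ℝ} (he : 0 < e) (hec : e ≤ c) :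
    triangle a c e = triangleParam a c e '' (Icc 0 1 ×ˢ Icc 0 1) := by
  have hc := he.trans_le hec
  have hce := one_div_le_one_div_of_le he hec
  ext ⟨x, y⟩
  rw [mem_triangle_iff hc]
  dsimp only
  constructor
  · rintro ⟨hy, hx⟩
    obtain ⟨t, ht, rfl⟩ := (Real.Icc_eq_image_lerp hce).subset hy
    obtain ⟨u, hu, rfl⟩ := (Real.Icc_eq_image_lerp (hx.1.trans hx.2)).subset hx
    exact ⟨(t, u), ⟨ht, hu⟩, rfl⟩
  · rintro ⟨⟨t, u⟩, ⟨ht, hu⟩, hxy⟩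
    rw [triangleParam, Prod.mk.injEq] at hxy
    obtain ⟨rfl, rfl⟩ := hxy
    have hy := (Real.Icc_eq_image_lerp hce).superset (mem_image_of_mem _ ht)
    refine ⟨hy, (Real.Icc_eq_image_lerp ?_).superset (mem_image_of_mem _ hu)⟩
    have := (div_le_iff₀ hc).1 hy.1
    linarith

theorem triangleParam_fst_pos {a c e : ℝ} (ha : 0 < a) (he : 0 < e) (hec : e ≤ c)
    {k : ℝ × ℝ} (hk : k ∈ Icc 0 1 ×ˢ Icc 0 1) : 0 < (triangleParam a c e k).1 := by
  have hc := he.trans_le hec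
  have hmem := (triangle_eq_image_triangleParam (a := a) he hec).superset (mem_image_of_mem _ hk)
  obtain ⟨⟨hy, -⟩, hx, -⟩ := (mem_triangle_iff hc).1 hmem
  exact (mul_pos ha ((one_div_pos.2 hc).trans_le hy)).trans_le hx

theorem continuousOn_triangleParam :
    ContinuousOn (fun q : (ℝ × ℝ × ℝ) × (ℝ × ℝ) => triangleParam q.1.1 q.1.2.1 q.1.2.2 q.2)
      {q | q.1.2.1 ≠ 0 ∧ q.1.2.2 ≠ 0} := by
  unfold triangleParam
  fun_prop (disch := intro q hq; simp_all)

theorem d0_nonneg {S0 μ0 ν0 α : ℝ} (hS0 : 0 ≤ S0) (hα : α ∈ Ioc 0 1) : 0 ≤ d0 S0 μ0 ν0 α := by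
  have := sub_nonneg.2 hα.2
  have := hα.1
  unfold d0
  positivity

theorem d1_nonneg {S1 μ1 ν1 α : ℝ} (hS1 : 0 ≤ S1) (hα : α ∈ Ioc 0 1) : 0 ≤ d1 S1 μ1 ν1 α := by
  have := sub_nonneg.2 hα.2
  have := hα.1
  unfold d1
  positivity

noncomputable def corrCoeffs (S0 S1 δ μ0 μ1 : ℝ) (ψ : ℝ × ℝ × ℝ) : ℝ × ℝ × ℝ :=
  (S0 + d0 S0 μ0 ψ.1 ψ.2.2,
    S1 + d1 S1 μ1 ψ.2.1 ψ.2.2 + (δ / ψ.2.2 - (ψ.1 - μ0) ^ 2 - (ψ.2.1 - μ1) ^ 2),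
    S1 + d1 S1 μ1 ψ.2.1 ψ.2.2)

theorem corr_eq_triangle (S0 S1 δ μ0 μ1 : ℝ) (ψ : ℝ × ℝ × ℝ) :
    corr S0 S1 δ μ0 μ1 ψ = triangle (corrCoeffs S0 S1 δ μ0 μ1 ψ).1
      (corrCoeffs S0 S1 δ μ0 μ1 ψ).2.1 (corrCoeffs S0 S1 δ μ0 μ1 ψ).2.2 := by
  ext s
  simp only [corr, triangle, corrCoeffs, mem_ofPred_eq]
  ring_nf

theorem continuousOn_corrCoeffs (S0 S1 δ μ0 μ1 : ℝ) :
    ContinuousOn (corrCoeffs S0 S1 δ μ0 μ1) {ψ | ψ.2.2 ≠ 0} := by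
  unfold corrCoeffs d0 d1
  fun_prop (disch := intro q hq; simp_all)

theorem corrCoeffs_pos_le {S0 S1 δ μ0 μ1 : ℝ} (hS0 : 0 < S0) (hS1 : 0 < S1) {ψ : ℝ × ℝ × ℝ}
    (hψ : ψ ∈ PsiSet μ0 μ1 δ) :
    0 < (corrCoeffs S0 S1 δ μ0 μ1 ψ).1 ∧ 0 < (corrCoeffs S0 S1 δ μ0 μ1 ψ).2.2 ∧
      (corrCoeffs S0 S1 δ μ0 μ1 ψ).2.2 ≤ (corrCoeffs S0 S1 δ μ0 μ1 ψ).2.1 := by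
  obtain ⟨hδ, hα0, hα1⟩ := hψ
  have hslack : (ψ.1 - μ0) ^ 2 + (ψ.2.1 - μ1) ^ 2 ≤ δ / ψ.2.2 := by
    rwa [le_div_iff₀' hα0]
  have := d0_nonneg (μ0 := μ0) (ν0 := ψ.1) hS0.le ⟨hα0, hα1.le⟩
  have := d1_nonneg (μ1 := μ1) (ν1 := ψ.2.1) hS1.le ⟨hα0, hα1.le⟩
  simp only [corrCoeffs]
  exact ⟨by linarith, by linarith, by linarith⟩

theorem continuousOn_objF (μ0 μ1 : ℝ) :
    ContinuousOn (fun q : (ℝ × ℝ) × (ℝ × ℝ × ℝ) => objF μ0 μ1 q.1 q.2)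
      {q | q.1.1 ≠ 0 ∧ q.2.2.2 ≠ 0} := by
  unfold objF
  fun_prop (disch := intro q hq; simp_all)

theorem stmt_10_general (S0 S1 δ μ0 μ1 : ℝ) (hS0 : 0 < S0) (hS1 : 0 < S1) :
    ContinuousOn
      (fun ψ => sInf ((fun s => objF μ0 μ1 s ψ) '' corr S0 S1 δ μ0 μ1 ψ))
      (PsiSet μ0 μ1 δ) := by
  set K : Set (ℝ × ℝ) := Icc 0 1 ×ˢ Icc 0 1
  set κ := corrCoeffs S0 S1 δ μ0 μ1
  set Φ := fun (ψ : ℝ × ℝ × ℝ) => triangleParam (κ ψ).1 (κ ψ).2.1 (κ ψ).2.2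
  have hΦ : ContinuousOn (fun p : (ℝ × ℝ × ℝ) × (ℝ × ℝ) => Φ p.1 p.2) (PsiSet μ0 μ1 δ ×ˢ K) := by
    refine continuousOn_triangleParam.comp (((continuousOn_corrCoeffs S0 S1 δ μ0 μ1).comp
      continuousOn_fst fun p hp => hp.1.2.1.ne').prodMk continuousOn_snd) fun p hp => ?_
    obtain ⟨-, he, hec⟩ := corrCoeffs_pos_le hS0 hS1 hp.1
    exact ⟨(he.trans_le hec).ne', he.ne'⟩
  have hΦpos : ∀ p ∈ PsiSet μ0 μ1 δ ×ˢ K, 0 < (Φ p.1 p.2).1 := fun p hp => by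
    obtain ⟨ha, he, hec⟩ := corrCoeffs_pos_le hS0 hS1 hp.1
    exact triangleParam_fst_pos ha he hec hp.2
  refine ((isCompact_Icc.prod isCompact_Icc).continuousOn_sInf_image
    (f := fun ψ k => objF μ0 μ1 (Φ ψ k) ψ) ((continuousOn_objF μ0 μ1).comp
      (hΦ.prodMk continuousOn_fst) fun p hp => ⟨(hΦpos p hp).ne', hp.1.2.1.ne'⟩)).congr
    fun ψ hψ => ?_
  obtain ⟨-, he, hec⟩ := corrCoeffs_pos_le hS0 hS1 hψ
  rw [corr_eq_triangle, triangle_eq_image_triangleParam he hec, image_image]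

/-- Theorem 2 of the paper (value-function part): the value function
`f*(ψ) = min{f(s,ψ) : s ∈ C(ψ)}` is continuous on `Ψ`. -/
theorem stmt_10 (S0 S1 δ μ0 μ1 : ℝ) (hS0 : 0 < S0) (hS1 : 0 < S1) (hδ : 0 < δ) :
    ContinuousOn
      (fun ψ => sInf ((fun s => objF μ0 μ1 s ψ) '' corr S0 S1 δ μ0 μ1 ψ))
      (PsiSet μ0 μ1 δ) :=
  stmt_10_general S0 S1 δ μ0 μ1 hS0 hS1
end

section
/- If ψ(k) → ψ in Ψ and s(k) ∈ C(ψ(k)) for each k, where C is the correspondence of the paper, then the sequence {s(k)} is eventually contained in a fixed compact subset M of R², and every limit point s̄ of {s(k)} satisfies s̄ ∈ C(ψ); consequently C has closed graph on Ψ. -/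
open Set

open Filter

/-!
For `α > 0` the coefficients in the definition of `C(ψ)` are continuous in `ψ`, so the graph of
`C` over `Ψ` is cut out by three non-strict inequalities between continuous functions and is
closed; a cluster point of `s(k)` is the limit of a subsequence, so it lies in `C(ψ)`. For the
compact set: the upper and lower slopes bounding `Γ̃0` differ by at least `Σ1`, which forces
`0 < Γ̃1 ≤ 1/Σ1`, and the upper slope stays bounded as `ψ(k) → ψ`.
-/

lemma d0_nonneg_s16 {S μ ν α : ℝ} (hS : 0 ≤ S) (hα₀ : 0 ≤ α) (hα₁ : α ≤ 1) : 0 ≤ d0 S μ ν α := by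
  unfold d0
  have := sub_nonneg.2 hα₁
  positivity

lemma d1_eq_d0 (S μ ν α : ℝ) : d1 S μ ν α = d0 S μ ν α := rfl

lemma Continuous.d0 {X : Type*} [TopologicalSpace X] {ν α : X → ℝ} (S μ : ℝ)
    (hν : Continuous ν) (hα : Continuous α) (hα₀ : ∀ x, α x ≠ 0) :
    Continuous fun x => d0 S μ (ν x) (α x) := by
  unfold _root_.d0
  exact Continuous.div (by fun_prop) hα hα₀

noncomputable def upperSlope (S0 S1 δ μ0 μ1 : ℝ) (ψ : ℝ × ℝ × ℝ) : ℝ :=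
  δ / ψ.2.2 - (ψ.1 - μ0) ^ 2 - (ψ.2.1 - μ1) ^ 2 + S0 + S1
    + d0 S0 μ0 ψ.1 ψ.2.2 + d1 S1 μ1 ψ.2.1 ψ.2.2

section

variable {S0 S1 δ μ0 μ1 : ℝ}

lemma continuous_upperSlope :
    Continuous fun ψ : PsiSet μ0 μ1 δ => upperSlope S0 S1 δ μ0 μ1 ψ := by
  have hα : Continuous fun ψ : PsiSet μ0 μ1 δ => (ψ : ℝ × ℝ × ℝ).2.2 := by fun_prop
  have hα₀ : ∀ ψ : PsiSet μ0 μ1 δ, (ψ : ℝ × ℝ × ℝ).2.2 ≠ 0 := fun ψ => ψ.2.2.1.ne'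
  unfold upperSlope
  simp only [d1_eq_d0]
  refine .add (.add ?_ (.d0 S0 μ0 (by fun_prop) hα hα₀)) (.d0 S1 μ1 (by fun_prop) hα hα₀)
  exact .add (.add (.sub (.sub (continuous_const.div hα hα₀) (by fun_prop)) (by fun_prop))
    continuous_const) continuous_const

lemma corr_subset_Icc (hS0 : 0 ≤ S0) (hS1 : 0 < S1) {ψ : ℝ × ℝ × ℝ}
    (hψ : ψ ∈ PsiSet μ0 μ1 δ) {B : ℝ} (hB : upperSlope S0 S1 δ μ0 μ1 ψ ≤ B) :
    corr S0 S1 δ μ0 μ1 ψ ⊆ Icc 0 (B / S1) ×ˢ Icc 0 (1 / S1) := by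
  rintro s ⟨hlow, hup, hs₂⟩
  obtain ⟨hdist, hα₀, hα₁⟩ := hψ
  have hd0 : 0 ≤ d0 S0 μ0 ψ.1 ψ.2.2 := d0_nonneg_s16 hS0 hα₀.le hα₁.le
  have hd1 : 0 ≤ d1 S1 μ1 ψ.2.1 ψ.2.2 := d0_nonneg_s16 hS1.le hα₀.le hα₁.le
  have hdist' : (ψ.1 - μ0) ^ 2 + (ψ.2.1 - μ1) ^ 2 ≤ δ / ψ.2.2 := by
    rw [le_div_iff₀ hα₀, mul_comm]; exact hdist
  have hgap : S1 ≤ upperSlope S0 S1 δ μ0 μ1 ψ - (S0 + d0 S0 μ0 ψ.1 ψ.2.2) := by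
    unfold upperSlope; linarith
  have hpos₂ : 0 < s.2 := by
    by_contra! h
    nlinarith [mul_nonpos_of_nonneg_of_nonpos (hS1.le.trans hgap) h]
  have hle₂ : s.2 ≤ 1 / S1 := hs₂.trans (one_div_le_one_div_of_le hS1 (by linarith))
  have hB₀ : 0 ≤ B := by linarith
  have hup' : s.1 ≤ upperSlope S0 S1 δ μ0 μ1 ψ * s.2 - 1 := hup
  refine ⟨⟨(mul_nonneg (by linarith) hpos₂.le).trans hlow, ?_⟩, hpos₂.le, hle₂⟩
  calc s.1 ≤ upperSlope S0 S1 δ μ0 μ1 ψ * s.2 := by linarith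
    _ ≤ B * (1 / S1) := mul_le_mul hB hle₂ hpos₂.le hB₀
    _ = B / S1 := mul_one_div B S1

lemma isClosed_graph_corr (hS1 : 0 < S1) :
    IsClosed {p : PsiSet μ0 μ1 δ × (ℝ × ℝ) | p.2 ∈ corr S0 S1 δ μ0 μ1 p.1.val} := by
  have hα : Continuous fun p : PsiSet μ0 μ1 δ × (ℝ × ℝ) => p.1.val.2.2 := by fun_prop
  have hα₀ : ∀ p : PsiSet μ0 μ1 δ × (ℝ × ℝ), p.1.val.2.2 ≠ 0 := fun p => p.1.2.2.1.ne'
  have hd0 := Continuous.d0 S0 μ0 (ν := fun p => p.1.val.1) (by fun_prop) hα hα₀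
  have hd1 := Continuous.d0 S1 μ1 (ν := fun p => p.1.val.2.1) (by fun_prop) hα hα₀
  have hslope : Continuous fun p : PsiSet μ0 μ1 δ × (ℝ × ℝ) =>
      upperSlope S0 S1 δ μ0 μ1 p.1 := continuous_upperSlope.comp continuous_fst
  have hden : ∀ p : PsiSet μ0 μ1 δ × (ℝ × ℝ), S1 + d1 S1 μ1 p.1.val.2.1 p.1.val.2.2 ≠ 0 :=
    fun p => (add_pos_of_pos_of_nonneg hS1 (d0_nonneg_s16 hS1.le p.1.2.2.1.le p.1.2.2.2.le)).ne'
  simp only [corr, ofPred_and, d1_eq_d0] at hden ⊢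
  refine (isClosed_le ?_ (by fun_prop)).inter ((isClosed_le (by fun_prop) ?_).inter
    (isClosed_le (by fun_prop) (continuous_const.div (continuous_const.add hd1) hden)))
  · exact (continuous_const.add hd0).mul (by fun_prop)
  · exact (hslope.mul (by fun_prop)).sub continuous_const

end

theorem stmt_16_general (S0 S1 δ μ0 μ1 : ℝ) (hS0 : 0 < S0) (hS1 : 0 < S1)
    (ψseq : ℕ → ℝ × ℝ × ℝ) (ψ : ℝ × ℝ × ℝ) (s : ℕ → ℝ × ℝ)
    (hψmem : ∀ k, ψseq k ∈ PsiSet μ0 μ1 δ) (hψ : ψ ∈ PsiSet μ0 μ1 δ)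
    (hlim : Tendsto ψseq atTop (nhds ψ))
    (hs : ∀ k, s k ∈ corr S0 S1 δ μ0 μ1 (ψseq k)) :
    (∃ M : Set (ℝ × ℝ), IsCompact M ∧ ∀ᶠ k in atTop, s k ∈ M)
    ∧ (∀ sbar : ℝ × ℝ, MapClusterPt sbar atTop s → sbar ∈ corr S0 S1 δ μ0 μ1 ψ)
    ∧ IsClosed {p : {x // x ∈ PsiSet μ0 μ1 δ} × (ℝ × ℝ) |
        p.2 ∈ corr S0 S1 δ μ0 μ1 p.1.val} := by
  let ψseq' : ℕ → PsiSet μ0 μ1 δ := fun k => ⟨ψseq k, hψmem k⟩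
  have hlim' : Tendsto ψseq' atTop (nhds ⟨ψ, hψ⟩) := tendsto_subtype_rng.2 hlim
  refine ⟨?_, fun sbar hsbar => ?_, isClosed_graph_corr hS1⟩
  · set B := upperSlope S0 S1 δ μ0 μ1 ψ + 1
    have hB : ∀ᶠ k in atTop, upperSlope S0 S1 δ μ0 μ1 (ψseq k) ≤ B :=
      ((continuous_upperSlope.tendsto _).comp hlim').eventually_le_const (lt_add_one _)
    refine ⟨Icc 0 (B / S1) ×ˢ Icc 0 (1 / S1), isCompact_Icc.prod isCompact_Icc, ?_⟩
    filter_upwards [hB] with k hk using corr_subset_Icc hS0.le hS1 (hψmem k) hk (hs k)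
  · obtain ⟨φ, hφ, hsφ⟩ := hsbar.tendsto_subseq
    have hpair : Tendsto (fun k => (ψseq' (φ k), s (φ k))) atTop (nhds (⟨ψ, hψ⟩, sbar)) :=
      (hlim'.comp hφ.tendsto_atTop).prodMk_nhds hsφ
    exact (isClosed_graph_corr hS1).mem_of_tendsto hpair (.of_forall fun k => hs (φ k))

/-- If `ψ(k) → ψ` in `Ψ` and `s(k) ∈ C(ψ(k))`, then `{s(k)}` is eventually contained
in a fixed compact set `M`, every cluster point of `{s(k)}` lies in `C(ψ)`, and
consequently `C` has closed graph on `Ψ`. -/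
theorem stmt_16 (S0 S1 δ μ0 μ1 : ℝ) (hS0 : 0 < S0) (hS1 : 0 < S1) (hδ : 0 < δ)
    (ψseq : ℕ → ℝ × ℝ × ℝ) (ψ : ℝ × ℝ × ℝ) (s : ℕ → ℝ × ℝ)
    (hψmem : ∀ k, ψseq k ∈ PsiSet μ0 μ1 δ) (hψ : ψ ∈ PsiSet μ0 μ1 δ)
    (hlim : Tendsto ψseq atTop (nhds ψ))
    (hs : ∀ k, s k ∈ corr S0 S1 δ μ0 μ1 (ψseq k)) :
    (∃ M : Set (ℝ × ℝ), IsCompact M ∧ ∀ᶠ k in atTop, s k ∈ M)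
    ∧ (∀ sbar : ℝ × ℝ, MapClusterPt sbar atTop s → sbar ∈ corr S0 S1 δ μ0 μ1 ψ)
    ∧ IsClosed {p : {x // x ∈ PsiSet μ0 μ1 δ} × (ℝ × ℝ) |
        p.2 ∈ corr S0 S1 δ μ0 μ1 p.1.val} :=
  stmt_16_general S0 S1 δ μ0 μ1 hS0 hS1 ψseq ψ s hψmem hψ hlim hs
end
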